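/- For every real number q > 0 with q ≠ 1, there exists ε > 0 such that for all real α, t with α ≥ 0, t ≤ δ(q), and 0 < √(α² + (t − δ(q))²) < ε, one has f_q(α, t) < 0. (Consequently, no functional γ_{α,t} with (α,t) in this punctured neighborhood of the trivial point (0, δ(q)) is an annular state, so the trivial representation is isolated among admissible representations and (G₂)_q has property (T).) -/

import Mathlib

/-- The loop value δ(q) of the trivalent category (G₂)_q. -/
noncomputable def G2del (q : ℝ) : ℝ :=
  q ^ 10 + q ^ 8 + q ^ 2 + 1 + 1 / q ^ 2 + 1 / q ^ 8 + 1 / q ^ 10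

/-- The triangle coefficient c(q) of (G₂)_q. -/
noncomputable def G2c (q : ℝ) : ℝ :=
  -((q ^ 2 - 1 + 1 / q ^ 2) / (q ^ 4 + 1 / q ^ 4))

/-- The square root ξ(q) appearing in the minimal idempotents of Mor(2,2) of (G₂)_q. -/
noncomputable def G2xi (q : ℝ) : ℝ :=
  (1 + q ^ 2) ^ 2 * (1 - q ^ 2 + q ^ 6 - q ^ 8 + q ^ 10 - q ^ 14 + q ^ 16) /
    (q ^ 6 * (1 + q ^ 8))

/-- The function f_q(α,t) = γ_{α,t}(s♯·s) built from the minimal idempotent y₋. -/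
noncomputable def G2f (q α t : ℝ) : ℝ :=
  G2del q * (-(G2del q + 1) * (G2c q) ^ 2 - G2xi q + 1) / (-2 * G2xi q)
    + t ^ 2 * (G2del q * ((G2c q) ^ 2 - 2 * G2c q - 2) + G2xi q + (G2c q) ^ 2
        - 2 * G2c q - 1) / (-2 * G2del q * G2xi q)
    - α * (G2del q * (G2c q + 2) * G2c q - G2xi q + (G2c q) ^ 2 + 1) / (-2 * G2xi q)
    + t * (G2del q * G2c q + G2del q + G2c q) / (-G2xi q)

/-! In the coordinates `α` and `u = δ(q) - t`, `f_q` is `-K` times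
`q²(1+q⁴)·α + u·((q⁴-1)² - ((1-q⁴+q⁸)/δ)·u)` with `K = (1+q²+q⁴)/(q⁴(1+q²)²) > 0`; in particular
it vanishes at the trivial point. For `q ≠ 1` both linear coefficients are positive, so the linear
part is positive on the closed quadrant `α, u ≥ 0` minus the origin and dominates the quadratic
term near the origin. -/

theorem exists_linear_add_mul_sub_pos_near_origin {a s b : ℝ}
    (ha : 0 < a) (hs : 0 < s) (hb : 0 < b) :
    ∃ ε > 0, ∀ α u : ℝ, 0 ≤ α → 0 ≤ u → 0 < Real.sqrt (α ^ 2 + u ^ 2) →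
      Real.sqrt (α ^ 2 + u ^ 2) < ε → 0 < a * α + u * (s - b * u) := by
  refine ⟨s / b, div_pos hs hb, fun α u hα hu hpos hlt => ?_⟩
  have hbu : b * u < s := by
    have hu_le : u ≤ Real.sqrt (α ^ 2 + u ^ 2) :=
      Real.le_sqrt_of_sq_le (le_add_of_nonneg_left (sq_nonneg α))
    rw [← lt_div_iff₀' hb]
    exact hu_le.trans_lt hlt
  rcases hα.eq_or_lt with rfl | hα
  · have hu : 0 < u := hu.lt_of_ne (by rintro rfl; simp at hpos)
    nlinarith
  · nlinarith [mul_nonneg hu (sub_nonneg.2 hbu.le)]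

theorem G2del_pos {q : ℝ} (hq : 0 < q) : 0 < G2del q := by
  unfold G2del; positivity

/-- The octic factor of `G2xi` is the cyclotomic polynomial `Φ₁₅(q²)`, and
`Φ₃ Φ₁₅ = (X¹⁵ - 1)/(X⁵ - 1) = 1 + X⁵ + X¹⁰`. -/
theorem cyclotomic_fifteen_mul (x : ℝ) :
    (1 + x + x ^ 2) * (1 - x + x ^ 3 - x ^ 4 + x ^ 5 - x ^ 7 + x ^ 8) = 1 + x ^ 5 + x ^ 10 := by
  ring

theorem G2xi_pos {q : ℝ} (hq : 0 < q) : 0 < G2xi q := by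
  have hP : 0 < 1 - q ^ 2 + q ^ 6 - q ^ 8 + q ^ 10 - q ^ 14 + q ^ 16 := by
    have h : (1 + q ^ 2 + q ^ 4) * (1 - q ^ 2 + q ^ 6 - q ^ 8 + q ^ 10 - q ^ 14 + q ^ 16)
        = 1 + q ^ 10 + q ^ 20 := by
      linear_combination cyclotomic_fifteen_mul (q ^ 2)
    refine pos_of_mul_pos_right ?_ (by positivity : (0 : ℝ) ≤ 1 + q ^ 2 + q ^ 4)
    rw [h]
    positivity
  unfold G2xi
  positivity

theorem G2f_eq {q : ℝ} (hq : 0 < q) (α t : ℝ) :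
    G2f q α t = -((1 + q ^ 2 + q ^ 4) / (q ^ 4 * (1 + q ^ 2) ^ 2)) *
      (q ^ 2 * (1 + q ^ 4) * α
        + (G2del q - t) * ((q ^ 4 - 1) ^ 2 - (1 - q ^ 4 + q ^ 8) / G2del q * (G2del q - t))) := by
  have hd := (G2del_pos hq).ne'
  have hx := (G2xi_pos hq).ne'
  rw [G2f]
  field_simp
  unfold G2del G2c G2xi at *
  field_simp
  ring

/-- For q > 0, q ≠ 1, the function f_q is strictly negative on a punctured neighborhood
of the trivial point (0, δ(q)) inside the region {α ≥ 0, t ≤ δ(q)}; hence the trivial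
representation is isolated among admissible representations and (G₂)_q has property (T). -/
theorem G2_propertyT_estimate (q : ℝ) (hq : 0 < q) (hq1 : q ≠ 1) :
    ∃ ε > 0, ∀ α t : ℝ, 0 ≤ α → t ≤ G2del q →
      0 < Real.sqrt (α ^ 2 + (t - G2del q) ^ 2) →
      Real.sqrt (α ^ 2 + (t - G2del q) ^ 2) < ε →
      G2f q α t < 0 := by
  have hs : 0 < (q ^ 4 - 1) ^ 2 := by
    refine sq_pos_of_ne_zero (sub_ne_zero.2 fun h => hq1 ?_)
    exact (pow_eq_one_iff_of_nonneg hq.le four_ne_zero).1 h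
  have hb : 0 < (1 - q ^ 4 + q ^ 8) / G2del q := by
    refine div_pos ?_ (G2del_pos hq)
    nlinarith [sq_nonneg (q ^ 4 - 1), pow_pos hq 4]
  have ha : 0 < q ^ 2 * (1 + q ^ 4) := by positivity
  obtain ⟨ε, hε, hpos⟩ := exists_linear_add_mul_sub_pos_near_origin ha hs hb
  refine ⟨ε, hε, fun α t hα ht hne hlt => ?_⟩
  rw [← neg_sub, neg_sq] at hne hlt
  rw [G2f_eq hq]
  exact mul_neg_of_neg_of_pos (neg_neg_of_pos (by positivity))
    (hpos α _ hα (sub_nonneg.2 ht) hne hlt)
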